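/- Let f and q be polynomials in ℝ[x_1,…,x_n] such that q ∈ Q(1−x_1², 1−x_2², …, 1−x_n²)_r and r ≥ deg(f). Then f + ‖f − q‖_{1,cheb} ∈ Q(1−x_1², 1−x_2², …, 1−x_n²)_{2r}. -/

import Mathlib

open Polynomial Finset

/-- The multivariate Chebyshev polynomial `T_α(x) = ∏ i, T_{α i}(x_i)`. -/
noncomputable def chebMv {n : ℕ} (α : Fin n → ℕ) : MvPolynomial (Fin n) ℝ :=
  ∏ i, Polynomial.aeval (MvPolynomial.X i) (Polynomial.Chebyshev.T ℝ (α i))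

/-- Membership in the truncated quadratic module `Q(1-x₁², …, 1-xₙ²)_r`. -/
def memCubeQM (n r : ℕ) (p : MvPolynomial (Fin n) ℝ) : Prop :=
  ∃ (σ₀ : MvPolynomial (Fin n) ℝ) (σ : Fin n → MvPolynomial (Fin n) ℝ),
    IsSumSq σ₀ ∧ (∀ i, IsSumSq (σ i)) ∧ σ₀.totalDegree ≤ r ∧
    (∀ i, (σ i).totalDegree ≤ r - 2) ∧
    p = σ₀ + ∑ i, (1 - MvPolynomial.X i ^ 2) * σ i

/-!
Write `f - q = ∑ c_α T_α`. Then `f + ‖f - q‖_{1,cheb} = q + ∑_α (|c_α| + c_α T_α)`, and comparing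
leading coefficients gives `|α| ≤ deg (f - q) ≤ max r 2` for every `α` that occurs. So it suffices
that `1 ± T_α ∈ Q_{2m}` whenever `|α| ≤ m`. The Pell identity `T_k² + (1 - x²) U_{k-1}² = 1` and the
telescoping `1 - ∏ a_i² = ∑_i (1 - a_i²) ∏_{j<i} a_j²` give
`1 - T_α² = ∑_i (1 - x_i²) (U_{α_i - 1}(x_i) ∏_{j<i} T_{α_j}(x_j))²`, whence
`1 ± T_α = ½ (1 ± T_α)² + ½ (1 - T_α²)`.

For `r ≤ 1` the truncated subtraction `r - 2 = 0` lets `Q_r` contain polynomials of degree 2, so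
this only yields `Q_4`. There `f + ‖f - q‖_{1,cheb}` has degree at most `r` and, lying in `Q_4`, is
nonnegative on the cube. A nonnegative constant is a square, and an affine `a + ∑ b_i x_i` that is
nonnegative at the vertices has `a ≥ ∑ |b_i|`, so it is `a - ∑ |b_i|` plus terms
`|b| + b x_i ∈ Q_2`.
-/

namespace Polynomial.Chebyshev

variable (R : Type*) [CommRing R]

theorem T_sq_add_one_sub_X_sq_mul_U_sq (n : ℤ) :
    T R n ^ 2 + (1 - X ^ 2) * U R (n - 1) ^ 2 = 1 := by
  have step (m : ℤ) :
      T R (m + 1) ^ 2 + (1 - X ^ 2) * U R m ^ 2 = T R m ^ 2 + (1 - X ^ 2) * U R (m - 1) ^ 2 := by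
    have hT := T_eq_X_mul_T_sub_pol_U R (m - 1)
    have hU := U_eq_X_mul_U_add_T R (m - 1)
    rw [show m - 1 + 2 = m + 1 by ring, sub_add_cancel] at hT
    rw [sub_add_cancel] at hU
    rw [hT, hU]
    ring
  induction n using Int.induction_on with
  | zero => simp
  | succ i ih => rw [add_sub_cancel_right, step, ih]
  | pred i ih => rw [← step, sub_add_cancel, ih]

end Polynomial.Chebyshev

theorem IsSumSq.map {R S : Type*} [Semiring R] [Semiring S] (f : R →+* S) {s : R}
    (hs : IsSumSq s) : IsSumSq (f s) := by
  induction hs with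
  | zero => simp
  | sq_add a _ ih => simpa using IsSumSq.sq_add (f a) ih

theorem isSumSq_smul_sq {A : Type*} [Semiring A] [Algebra ℝ A] {t : ℝ} (ht : 0 ≤ t) (y : A) :
    IsSumSq (t • y ^ 2) := by
  have : t • y ^ 2 = (√t • y) * (√t • y) := by
    rw [smul_mul_smul, Real.mul_self_sqrt ht, sq]
  exact this ▸ IsSumSq.mul_self _

namespace MvPolynomial

variable {σ R : Type*} [CommSemiring R]

theorem totalDegree_aeval_X_le (i : σ) (p : R[X]) :
    (Polynomial.aeval (X i) p : MvPolynomial σ R).totalDegree ≤ p.natDegree := by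
  rw [aeval_eq_sum_range]
  refine totalDegree_finsetSum_le fun k hk => (totalDegree_smul_le _ _).trans ?_
  calc (X i ^ k : MvPolynomial σ R).totalDegree ≤ (Finsupp.single i k).sum fun _ => id := by
        rw [X_pow_eq_monomial]; exact totalDegree_monomial_le _ _
    _ = k := by simp
    _ ≤ p.natDegree := Nat.lt_succ_iff.mp (Finset.mem_range.mp hk)

theorem coeff_prod_aeval_X [Fintype σ] [DecidableEq σ] (p : σ → R[X]) (m : σ →₀ ℕ) :
    coeff m (∏ i, Polynomial.aeval (X i) (p i)) = ∏ i, (p i).coeff (m i) := by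
  have hsum (i : σ) : Polynomial.aeval (X i) (p i) =
      ∑ k ∈ (p i).support, monomial (Finsupp.single i k) ((p i).coeff k) := by
    conv_lhs => rw [(p i).as_sum_support]
    simp [map_sum, X_pow_eq_monomial, C_mul_monomial]
  simp_rw [hsum, prod_univ_sum, ← monomial_sum_prod, coeff_sum, coeff_monomial]
  simp_rw [← DFunLike.coe_fn_eq, Finsupp.coe_univ_sum_single, sum_ite_eq']
  split_ifs with hm
  · rfl
  · obtain ⟨i, hi⟩ : ∃ i, m i ∉ (p i).support := by simpa using hm
    exact (prod_eq_zero (mem_univ i) (Polynomial.notMem_support_iff.mp hi)).symm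

theorem eq_C_add_sum_smul_X_of_totalDegree_le_one [Fintype σ] {p : MvPolynomial σ R}
    (hp : p.totalDegree ≤ 1) :
    p = C (p.coeff 0) + ∑ i, p.coeff (Finsupp.single i 1) • X i := by
  classical
  ext m
  simp only [coeff_add, coeff_C, coeff_sum, coeff_smul, coeff_X, smul_eq_mul, mul_ite, mul_one,
    mul_zero]
  rcases Nat.lt_or_ge 1 m.degree with hm | hm
  · have hm0 : m ≠ 0 := by rintro rfl; simp at hm
    have hm1 (i : σ) : Finsupp.single i 1 ≠ m := by rintro rfl; simp at hm
    simp [coeff_eq_zero_of_totalDegree_lt (hp.trans_lt hm), hm0.symm, hm1]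
  · obtain hm | hm := Nat.le_one_iff_eq_zero_or_eq_one.mp hm
    · obtain rfl := (Finsupp.degree_eq_zero_iff m).mp hm
      simp
    · obtain ⟨j, rfl⟩ : m ∈ Set.range fun i => Finsupp.single i 1 := by
        rw [Finsupp.range_single_one]; exact hm
      simp [Finsupp.single_left_inj one_ne_zero, (Finsupp.single_ne_zero.mpr one_ne_zero).symm]

theorem isSumSq_C {t : ℝ} (ht : 0 ≤ t) : IsSumSq (C t : MvPolynomial σ ℝ) := by
  simpa [smul_eq_C_mul] using isSumSq_smul_sq ht (1 : MvPolynomial σ ℝ)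

end MvPolynomial

section ChebyshevBasis

open MvPolynomial Polynomial.Chebyshev

variable {n : ℕ}

theorem coeff_chebMv (α : Fin n → ℕ) (m : Fin n →₀ ℕ) :
    (chebMv α).coeff m = ∏ i, (T ℝ (α i)).coeff (m i) := by
  classical exact coeff_prod_aeval_X _ m

theorem coeff_chebMv_self_ne_zero (α : Fin n → ℕ) :
    (chebMv α).coeff (Finsupp.equivFunOnFinite.symm α) ≠ 0 := by
  rw [coeff_chebMv]
  refine prod_ne_zero_iff.mpr fun i _ => ?_
  change (T ℝ (α i)).coeff (α i) ≠ 0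
  have h := coeff_natDegree (p := T ℝ (α i))
  rw [natDegree_T, Int.natAbs_natCast] at h
  rw [h, leadingCoeff_T]
  positivity

theorem coeff_chebMv_eq_zero {α : Fin n → ℕ} {m : Fin n →₀ ℕ} {i : Fin n} (hi : α i < m i) :
    (chebMv α).coeff m = 0 := by
  rw [coeff_chebMv]
  exact prod_eq_zero (mem_univ i) (coeff_eq_zero_of_natDegree_lt (by simpa))

theorem totalDegree_chebMv_le (α : Fin n → ℕ) : (chebMv α).totalDegree ≤ ∑ i, α i :=
  (totalDegree_finsetProd _ _).trans <|
    sum_le_sum fun i _ => (totalDegree_aeval_X_le i _).trans (by simp)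

theorem chebMv_piSingle_one (i : Fin n) : chebMv (Pi.single i 1) = X i := by
  rw [chebMv, prod_eq_single i]
  · simp
  · intro j _ hj
    simp [hj]
  · simp

theorem le_totalDegree_sum_smul_chebMv (c : (Fin n → ℕ) →₀ ℝ) {α : Fin n → ℕ}
    (hα : α ∈ c.support) : ∑ i, α i ≤ (∑ β ∈ c.support, c β • chebMv β).totalDegree := by
  obtain ⟨β, hβ, hmax⟩ := exists_max_image c.support (fun γ => ∑ i, γ i) ⟨α, hα⟩
  refine (hmax α hα).trans ?_
  have hcoeff : (∑ γ ∈ c.support, c γ • chebMv γ).coeff (Finsupp.equivFunOnFinite.symm β)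
      = c β * (chebMv β).coeff (Finsupp.equivFunOnFinite.symm β) := by
    rw [MvPolynomial.coeff_sum, sum_eq_single β _ (fun h => absurd hβ h), MvPolynomial.coeff_smul,
      smul_eq_mul]
    intro γ hγ hne
    obtain ⟨i, hi⟩ : ∃ i, γ i < β i := by
      by_contra! hle
      exact hne (funext fun i => ((sum_eq_sum_iff_of_le fun i _ => hle i).mp
        ((sum_le_sum fun i _ => hle i).antisymm (hmax γ hγ)) i (mem_univ i)).symm)
    rw [MvPolynomial.coeff_smul, coeff_chebMv_eq_zero (by simpa using hi), smul_zero]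
  have hne : (∑ γ ∈ c.support, c γ • chebMv γ).coeff (Finsupp.equivFunOnFinite.symm β) ≠ 0 :=
    hcoeff ▸ mul_ne_zero (Finsupp.mem_support_iff.mp hβ) (coeff_chebMv_self_ne_zero β)
  simpa [Finsupp.equivFunOnFinite_symm_sum] using le_totalDegree (mem_support_iff.mpr hne)

noncomputable def chebWeight (α : Fin n → ℕ) (i : Fin n) : MvPolynomial (Fin n) ℝ :=
  Polynomial.aeval (X i) (U ℝ (α i - 1)) * ∏ j with j < i, Polynomial.aeval (X j) (T ℝ (α j))

theorem one_sub_chebMv_sq (α : Fin n → ℕ) :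
    1 - chebMv α ^ 2 = ∑ i, (1 - X i ^ 2) * chebWeight α i ^ 2 := by
  have hpell (i : Fin n) : 1 - Polynomial.aeval (X i : MvPolynomial (Fin n) ℝ) (T ℝ (α i)) ^ 2 =
      (1 - X i ^ 2) * Polynomial.aeval (X i) (U ℝ (α i - 1)) ^ 2 := by
    have h := congrArg (Polynomial.aeval (X i : MvPolynomial (Fin n) ℝ))
      (T_sq_add_one_sub_X_sq_mul_U_sq ℝ (α i))
    simp only [map_add, map_mul, map_pow, map_sub, map_one, Polynomial.aeval_X] at h
    linear_combination -h
  have h := prod_one_sub_ordered univ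
    (fun i => 1 - Polynomial.aeval (X i : MvPolynomial (Fin n) ℝ) (T ℝ (α i)) ^ 2)
  simp only [sub_sub_cancel] at h
  rw [chebMv, ← prod_pow, h, sub_sub_cancel]
  refine sum_congr rfl fun i _ => ?_
  rw [chebWeight, mul_pow, prod_pow, hpell]
  ring

theorem totalDegree_chebWeight_le (α : Fin n → ℕ) (i : Fin n) :
    (chebWeight α i).totalDegree ≤ ∑ j, α j - 1 := by
  rcases Nat.eq_zero_or_pos (α i) with h | h
  · simp [chebWeight, h]
  have hsplit : α i + ∑ j with j < i, α j ≤ ∑ j, α j := by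
    rw [← sum_insert (by simp)]
    exact sum_le_sum_of_subset (subset_univ _)
  rw [chebWeight]
  refine (totalDegree_mul _ _).trans <| (add_le_add (totalDegree_aeval_X_le i _) <|
    (totalDegree_finsetProd _ _).trans <|
      sum_le_sum (g := α) fun j _ => (totalDegree_aeval_X_le j _).trans (by simp)).trans ?_
  rw [natDegree_U]
  omega

end ChebyshevBasis

section QuadraticModule

open MvPolynomial

variable {n r : ℕ} {p q : MvPolynomial (Fin n) ℝ}

theorem memCubeQM_C {t : ℝ} (ht : 0 ≤ t) : memCubeQM n r (C t) :=
  ⟨C t, 0, isSumSq_C ht, fun _ => .zero, by simp, fun _ => by simp, by simp⟩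

namespace memCubeQM

theorem mono (hp : memCubeQM n r p) {r' : ℕ} (h : r ≤ r') : memCubeQM n r' p := by
  obtain ⟨σ₀, σ, h₀, hσ, hd₀, hdσ, rfl⟩ := hp
  exact ⟨σ₀, σ, h₀, hσ, hd₀.trans h, fun i => (hdσ i).trans (Nat.sub_le_sub_right h 2), rfl⟩

theorem add (hp : memCubeQM n r p) (hq : memCubeQM n r q) : memCubeQM n r (p + q) := by
  obtain ⟨σ₀, σ, h₀, hσ, hd₀, hdσ, rfl⟩ := hp
  obtain ⟨τ₀, τ, h₀', hτ, hd₀', hdτ, rfl⟩ := hq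
  refine ⟨σ₀ + τ₀, σ + τ, h₀.add h₀', fun i => (hσ i).add (hτ i),
    (totalDegree_add _ _).trans (max_le hd₀ hd₀'),
    fun i => (totalDegree_add _ _).trans (max_le (hdσ i) (hdτ i)), ?_⟩
  simp only [Pi.add_apply, mul_add, sum_add_distrib]
  ring

theorem smul (hp : memCubeQM n r p) {t : ℝ} (ht : 0 ≤ t) : memCubeQM n r (t • p) := by
  obtain ⟨σ₀, σ, h₀, hσ, hd₀, hdσ, rfl⟩ := hp
  refine ⟨t • σ₀, t • σ, ?_, fun i => ?_, (totalDegree_smul_le _ _).trans hd₀,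
    fun i => (totalDegree_smul_le _ _).trans (hdσ i), ?_⟩
  · simpa [MvPolynomial.smul_eq_C_mul] using (isSumSq_C ht).mul h₀
  · simpa [MvPolynomial.smul_eq_C_mul] using (isSumSq_C ht).mul (hσ i)
  · simp only [smul_add, Finset.smul_sum, Pi.smul_apply, mul_smul_comm]

theorem totalDegree_le (hp : memCubeQM n r p) : p.totalDegree ≤ max r 2 := by
  obtain ⟨σ₀, σ, -, -, hd₀, hdσ, rfl⟩ := hp
  refine (totalDegree_add _ _).trans (max_le (hd₀.trans (le_max_left _ _)) ?_)
  refine totalDegree_finsetSum_le fun i _ => (totalDegree_mul _ _).trans ?_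
  have h : (1 - X i ^ 2 : MvPolynomial (Fin n) ℝ).totalDegree ≤ 2 :=
    (totalDegree_sub _ _).trans (max_le (by simp) (totalDegree_X_pow i 2).le)
  have := hdσ i
  omega

theorem eval_nonneg (hp : memCubeQM n r p) {x : Fin n → ℝ} (hx : ∀ i, x i ^ 2 ≤ 1) :
    0 ≤ eval x p := by
  obtain ⟨σ₀, σ, h₀, hσ, -, -, rfl⟩ := hp
  simp only [map_add, map_sum, map_mul, map_sub, map_one, map_pow, MvPolynomial.eval_X]
  exact add_nonneg (h₀.map (eval x)).nonneg <| sum_nonneg fun i _ =>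
    mul_nonneg (sub_nonneg.mpr (hx i)) ((hσ i).map (eval x)).nonneg

end memCubeQM

theorem memCubeQM_sum {ι : Type*} (s : Finset ι) (f : ι → MvPolynomial (Fin n) ℝ)
    (h : ∀ i ∈ s, memCubeQM n r (f i)) : memCubeQM n r (∑ i ∈ s, f i) := by
  induction s using Finset.cons_induction with
  | empty => simpa using memCubeQM_C (n := n) (r := r) le_rfl
  | cons a s ha ih =>
    rw [sum_cons]
    exact (h a (mem_cons_self a s)).add (ih fun i hi => h i (mem_cons_of_mem hi))

theorem memCubeQM_one_add_smul_chebMv {m : ℕ} {α : Fin n → ℕ} (hα : ∑ i, α i ≤ m) {s : ℝ}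
    (hs : s ^ 2 = 1) : memCubeQM n (2 * m) (1 + s • chebMv α) := by
  refine ⟨(2⁻¹ : ℝ) • (1 + s • chebMv α) ^ 2, fun i => (2⁻¹ : ℝ) • chebWeight α i ^ 2,
    isSumSq_smul_sq (by norm_num) _, fun i => isSumSq_smul_sq (by norm_num) _, ?_, fun i => ?_, ?_⟩
  · have h : (1 + s • chebMv α).totalDegree ≤ m :=
      (totalDegree_add _ _).trans <| max_le (by simp) <|
        (totalDegree_smul_le _ _).trans ((totalDegree_chebMv_le α).trans hα)
    exact (totalDegree_smul_le _ _).trans <| (totalDegree_pow _ _).trans (by omega)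
  · have h := totalDegree_chebWeight_le α i
    exact (totalDegree_smul_le _ _).trans <| (totalDegree_pow _ _).trans (by omega)
  · rw [show ∑ i, (1 - X i ^ 2) * (2⁻¹ : ℝ) • chebWeight α i ^ 2 =
        (2⁻¹ : ℝ) • (1 - chebMv α ^ 2) by simp only [one_sub_chebMv_sq, smul_sum, mul_smul_comm]]
    simp only [MvPolynomial.smul_eq_C_mul]
    have hC : (MvPolynomial.C 2⁻¹ : MvPolynomial (Fin n) ℝ) * 2 = 1 := by
      rw [← map_ofNat MvPolynomial.C 2, ← map_mul, inv_mul_cancel₀ two_ne_zero, map_one]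
    have hCs : (MvPolynomial.C s : MvPolynomial (Fin n) ℝ) ^ 2 = 1 := by
      rw [← map_pow, hs, map_one]
    linear_combination (-(1 + MvPolynomial.C s * chebMv α)) * hC
      + (-(MvPolynomial.C 2⁻¹ * chebMv α ^ 2)) * hCs

theorem memCubeQM_C_abs_add_smul_chebMv {m : ℕ} {α : Fin n → ℕ} (hα : ∑ i, α i ≤ m) (a : ℝ) :
    memCubeQM n (2 * m) (MvPolynomial.C |a| + a • chebMv α) := by
  rcases le_total 0 a with ha | ha
  · simpa [abs_of_nonneg ha, smul_add, MvPolynomial.smul_eq_C_mul] using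
      (memCubeQM_one_add_smul_chebMv hα (one_pow 2)).smul ha
  · simpa [abs_of_nonpos ha, smul_add, MvPolynomial.smul_eq_C_mul] using
      (memCubeQM_one_add_smul_chebMv hα (s := -1) (by norm_num)).smul (neg_nonneg.mpr ha)

theorem memCubeQM_two_of_totalDegree_le_one (hp : p.totalDegree ≤ 1)
    (hnonneg : ∀ x : Fin n → ℝ, (∀ i, x i ^ 2 ≤ 1) → 0 ≤ eval x p) : memCubeQM n 2 p := by
  obtain ⟨a, b, rfl⟩ : ∃ (a : ℝ) (b : Fin n → ℝ), p = MvPolynomial.C a + ∑ i, b i • X i :=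
    ⟨_, _, eq_C_add_sum_smul_X_of_totalDegree_le_one hp⟩
  have hvertex : 0 ≤ a - ∑ i, |b i| := by
    have h := hnonneg (fun i => if 0 ≤ b i then -1 else 1) fun i => by split_ifs <;> norm_num
    have hb (i : Fin n) : b i * (if 0 ≤ b i then -1 else 1) = -|b i| := by
      split_ifs with hi
      · rw [abs_of_nonneg hi]; ring
      · rw [abs_of_neg (not_le.mp hi)]; ring
    simpa [hb, sub_eq_add_neg] using h
  have hrepr : MvPolynomial.C a + ∑ i, b i • X i = MvPolynomial.C (a - ∑ i, |b i|)
      + ∑ i, (MvPolynomial.C |b i| + b i • chebMv (Pi.single i 1)) := by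
    simp only [chebMv_piSingle_one, sum_add_distrib, ← map_sum, map_sub]
    ring
  rw [hrepr]
  exact (memCubeQM_C hvertex).add <| memCubeQM_sum _ _ fun i _ =>
    memCubeQM_C_abs_add_smul_chebMv (m := 1) (by rw [sum_pi_single']; simp) (b i)

end QuadraticModule

/-- If `q ∈ Q(1-x₁², …, 1-xₙ²)_r` and `r ≥ deg f`, then
`f + ‖f - q‖_{1,cheb} ∈ Q(1-x₁², …, 1-xₙ²)_{2r}`, where the Chebyshev expansion of
`f - q` is `∑_α c_α T_α` and `‖f - q‖_{1,cheb} = ∑_α |c_α|`. -/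
theorem add_chebNorm_mem_quadraticModule (n r : ℕ) (f q : MvPolynomial (Fin n) ℝ)
    (hq : memCubeQM n r q) (hr : f.totalDegree ≤ r)
    (c : (Fin n → ℕ) →₀ ℝ) (hc : f - q = ∑ α ∈ c.support, c α • chebMv α) :
    memCubeQM n (2 * r) (f + MvPolynomial.C (∑ α ∈ c.support, |c α|)) := by
  set p := f + MvPolynomial.C (∑ α ∈ c.support, |c α|)
  have hdeg (α : Fin n → ℕ) (hα : α ∈ c.support) : ∑ i, α i ≤ max r 2 :=
    (le_totalDegree_sum_smul_chebMv c hα).trans <| hc ▸ (MvPolynomial.totalDegree_sub f q).trans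
      (max_le (hr.trans (le_max_left _ _)) hq.totalDegree_le)
  have hrepr : p = q + ∑ α ∈ c.support, (MvPolynomial.C |c α| + c α • chebMv α) := by
    rw [sum_add_distrib, ← hc, ← map_sum]
    ring
  have hmem : memCubeQM n (2 * max r 2) p := hrepr ▸ (hq.mono (by omega)).add
    (memCubeQM_sum _ _ fun α hα => memCubeQM_C_abs_add_smul_chebMv (hdeg α hα) (c α))
  have hp : p.totalDegree ≤ r := (MvPolynomial.totalDegree_add _ _).trans <|
    max_le hr ((MvPolynomial.totalDegree_C _).trans_le r.zero_le)
  rcases (by omega : r = 0 ∨ r = 1 ∨ 2 ≤ r) with rfl | rfl | hr2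
  · rw [MvPolynomial.totalDegree_eq_zero_iff_eq_C.mp (Nat.le_zero.mp hp)] at hmem ⊢
    exact memCubeQM_C (by simpa using hmem.eval_nonneg (x := 0) (by simp))
  · exact memCubeQM_two_of_totalDegree_le_one hp fun x hx => hmem.eval_nonneg hx
  · rwa [max_eq_left hr2] at hmem
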